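/- arXiv:0904.1479 — 5 statements merged into one kernel-verified Lean document; each statement's English description precedes it below -/
import Mathlib

section
/- For every integer n ≥ 2, exc(n, V_2) = ⌈2^{n+1}/3⌉, where V_2 = {0,1}^2 is the full vertex set of the 2-dimensional cube. That is, the maximum size of a subset S ⊆ {0,1}^n containing no embedded copy of the full 2-dimensional subcube is exactly ⌈2^{n+1}/3⌉. -/
open Finset Filter Topology

/-- The weight of a vertex of the hypercube `{0,1}^n`: number of coordinates equal to 1. -/
def cubeWeight {n : ℕ} (x : Fin n → Bool) : ℕ :=
  (Finset.univ.filter fun i => x i = true).card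

/-- The support of a vertex of the hypercube: the set of coordinates equal to 1. -/
def cubeSupp {n : ℕ} (x : Fin n → Bool) : Finset (Fin n) :=
  Finset.univ.filter fun i => x i = true

/-- An embedding of the `d`-dimensional hypercube `Q_d` into `Q_n`: an injective map on
vertices that preserves the edges (pairs at Hamming distance 1). -/
def IsCubeEmbedding {d n : ℕ} (i : (Fin d → Bool) → (Fin n → Bool)) : Prop :=
  Function.Injective i ∧
    ∀ x y : Fin d → Bool, hammingDist x y = 1 → hammingDist (i x) (i y) = 1

/-- `S ⊆ V_n` is `F`-free (for `F ⊆ V_d`) if no embedding `i : Q_d → Q_n` has `i(F) ⊆ S`. -/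
def IsFree {d n : ℕ} (F : Set (Fin d → Bool)) (S : Set (Fin n → Bool)) : Prop :=
  ∀ i : (Fin d → Bool) → (Fin n → Bool), IsCubeEmbedding i → ¬ (i '' F ⊆ S)

/-- `exc n F`: the maximum size of an `F`-free subset of `V_n = {0,1}^n`. -/
noncomputable def exc {d : ℕ} (n : ℕ) (F : Set (Fin d → Bool)) : ℕ :=
  sSup {k : ℕ | ∃ S : Finset (Fin n → Bool), IsFree F (S : Set (Fin n → Bool)) ∧ S.card = k}

/-!
Embedded copies of `Q_2` are exactly the squares `{update (update x i a) j b}` with `i ≠ j`.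

Lower bound: a square has weights `w, w + 1, w + 1, w + 2`, which meet every residue mod 3, so
the vertices whose weight avoids one residue class form a square-free set; the largest of the
three has at least `2^(n+1)/3` elements.

Upper bound `3|S| ≤ 2^(n+1) + 2`, by induction from `n` to `n + 2`: forgetting two coordinates
projects `Q_(n+2)` onto `Q_n` with square fibres, so each fibre holds at most 3 points of `S`.
If two adjacent fibres both hold 3 points, their missing points are antipodal, since otherwise a
square of `S` uses one direction of the base and one of the fibre. Around a square of full fibres
they therefore read `F, F', F, F'` with `F'` the antipodal image of `F`, and a point of `F ∩ F'`
gives a square of `S` in base directions. So the full fibres form a square-free set `U ⊆ Q_n`, and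
`|S| ≤ 2·2^n + |U|`.
-/

open Function

section Square

variable {ι : Type*} [DecidableEq ι]

def HasSquare (S : Set (ι → Bool)) : Prop :=
  ∃ x : ι → Bool, ∃ i j : ι, i ≠ j ∧ ∀ a b : Bool, update (update x i a) j b ∈ S

theorem hammingDist_eq_one_iff [Fintype ι] {x y : ι → Bool} :
    hammingDist x y = 1 ↔ ∃ i, y = update x i (!x i) := by
  constructor
  · intro h
    obtain ⟨i, hi⟩ := card_eq_one.mp h
    have hdiff : ∀ t, x t ≠ y t ↔ t = i := fun t => by
      simpa using congrArg (t ∈ ·) hi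
    refine ⟨i, funext fun t => ?_⟩
    rcases eq_or_ne t i with rfl | ht
    · simpa [Bool.eq_not_iff, eq_comm] using (hdiff t).2 rfl
    · simpa [ht, eq_comm] using (hdiff t).not.2 ht
  · rintro ⟨i, rfl⟩
    refine card_eq_one.mpr ⟨i, ?_⟩
    ext t
    by_cases t = i <;> simp_all [update_apply]

end Square

theorem isCubeEmbedding_square {n : ℕ} (x : Fin n → Bool) {i j : Fin n} (hij : i ≠ j) :
    IsCubeEmbedding fun v : Fin 2 → Bool => update (update x i (v 0)) j (v 1) := by
  constructor
  · intro u v h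
    have h0 := congrFun h i
    have h1 := congrFun h j
    simp only [update_self, update_of_ne hij] at h0 h1
    ext k
    fin_cases k <;> assumption
  · intro u v huv
    obtain ⟨k, rfl⟩ := hammingDist_eq_one_iff.mp huv
    rw [hammingDist_eq_one_iff]
    refine ⟨![i, j] k, funext fun t => ?_⟩
    fin_cases k <;> simp [update_apply] <;> split_ifs <;> simp_all

theorem hasSquare_of_isCubeEmbedding {n : ℕ} {S : Set (Fin n → Bool)}
    {e : (Fin 2 → Bool) → Fin n → Bool} (he : IsCubeEmbedding e) (hS : Set.range e ⊆ S) :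
    HasSquare S := by
  obtain ⟨x, hx⟩ : ∃ x, e ![false, false] = x := ⟨_, rfl⟩
  have edge : ∀ u v, hammingDist u v = 1 → ∃ t, e v = update (e u) t (!e u t) :=
    fun u v huv => hammingDist_eq_one_iff.mp (he.2 u v huv)
  obtain ⟨i, hi⟩ := hx ▸ edge ![false, false] ![true, false] (by decide)
  obtain ⟨j, hj⟩ := hx ▸ edge ![false, false] ![false, true] (by decide)
  obtain ⟨k, hk⟩ := edge ![true, false] ![true, true] (by decide)
  obtain ⟨l, hl⟩ := edge ![false, true] ![true, true] (by decide)
  have hij : i ≠ j := by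
    rintro rfl
    exact absurd (he.1 (hi.trans hj.symm)) (by decide)
  have hlj : l ≠ j := by
    rintro rfl
    simp only [hj, update_self, Bool.not_not, update_idem, update_eq_self] at hl
    exact absurd (he.1 (hl.trans hx.symm)) (by decide)
  -- `e ![true, true]` is `x` with two coordinates flipped: `i, k` and also `j, l`
  have hkj : k = j := by
    by_contra hkj
    have := congrFun (hk.symm.trans hl) j
    simp [hi, hj, update_apply, Ne.symm hkj, Ne.symm hlj, hij.symm] at this
  subst hkj
  have corners : ∀ a b, ∃ v, e v = update (update x i a) k b := by
    intro a b
    rcases eq_or_ne a (x i) with rfl | ha <;> rcases eq_or_ne b (x k) with rfl | hb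
    · exact ⟨![false, false], by simp [hx]⟩
    · exact ⟨![false, true], by rw [hj, Bool.eq_not_iff.mpr hb]; simp⟩
    · exact ⟨![true, false], by rw [hi, Bool.eq_not_iff.mpr ha]; simp [hij.symm]⟩
    · exact ⟨![true, true], by
        rw [hk, hi, Bool.eq_not_iff.mpr ha, Bool.eq_not_iff.mpr hb]; simp [hij.symm]⟩
  exact ⟨x, i, k, hij, fun a b => hS (corners a b)⟩

theorem isFree_univ_iff_not_hasSquare {n : ℕ} {S : Set (Fin n → Bool)} :
    IsFree (Set.univ : Set (Fin 2 → Bool)) S ↔ ¬HasSquare S := by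
  constructor
  · rintro hfree ⟨x, i, j, hij, hsq⟩
    refine hfree _ (isCubeEmbedding_square x hij) ?_
    rintro _ ⟨v, -, rfl⟩
    exact hsq _ _
  · intro h e he hsub
    exact h (hasSquare_of_isCubeEmbedding he (Set.image_univ ▸ hsub))

section Weight

variable {n : ℕ}

theorem cubeWeight_eq_sum (x : Fin n → Bool) : cubeWeight x = ∑ t, (x t).toNat := by
  rw [cubeWeight, card_filter]
  exact sum_congr rfl fun t _ => by cases x t <;> rfl

theorem cubeWeight_update_add (x : Fin n → Bool) (i : Fin n) (a : Bool) :
    cubeWeight (update x i a) + (x i).toNat = cubeWeight x + a.toNat := by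
  have hrest :
      ∑ t ∈ univ.erase i, (update x i a t).toNat = ∑ t ∈ univ.erase i, (x t).toNat :=
    sum_congr rfl fun t ht => by rw [update_of_ne (ne_of_mem_erase ht)]
  rw [cubeWeight_eq_sum, cubeWeight_eq_sum, ← add_sum_erase _ _ (mem_univ i),
    ← add_sum_erase _ _ (mem_univ i), hrest, update_self]
  ring

theorem cubeWeight_square (x : Fin n → Bool) {i j : Fin n} (hij : i ≠ j) (a b : Bool) :
    cubeWeight (update (update x i a) j b) + (x i).toNat + (x j).toNat
      = cubeWeight x + a.toNat + b.toNat := by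
  have hj := cubeWeight_update_add (update x i a) j b
  have hi := cubeWeight_update_add x i a
  rw [update_of_ne hij.symm] at hj
  omega

def weightAvoiding (n : ℕ) (r : ZMod 3) : Finset (Fin n → Bool) :=
  {x | (cubeWeight x : ZMod 3) ≠ r}

theorem not_hasSquare_weightAvoiding (r : ZMod 3) :
    ¬HasSquare (weightAvoiding n r : Set (Fin n → Bool)) := by
  rintro ⟨x, i, j, hij, hsq⟩
  have hweight : ∀ a b, (cubeWeight (update (update x i a) j b) : ZMod 3)
      = cubeWeight x - (x i).toNat - (x j).toNat + a.toNat + b.toNat := fun a b => by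
    have := congrArg (Nat.cast : ℕ → ZMod 3) (cubeWeight_square x hij a b)
    push_cast at this
    linear_combination this
  have hmem : ∀ a b, (cubeWeight (update (update x i a) j b) : ZMod 3) ≠ r := fun a b => by
    simpa [weightAvoiding] using hsq a b
  have h00 := hmem false false
  have h10 := hmem true false
  have h11 := hmem true true
  simp only [hweight, Bool.toNat_false, Bool.toNat_true, Nat.cast_zero, Nat.cast_one] at h00 h10 h11
  generalize (cubeWeight x : ZMod 3) - (x i).toNat - (x j).toNat = w at h00 h10 h11
  clear hsq hmem hweight
  revert w r
  decide

theorem exists_card_weightAvoiding (n : ℕ) :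
    ∃ r, 2 ^ (n + 1) ≤ 3 * #(weightAvoiding n r) := by
  obtain ⟨r, hr⟩ := Fintype.exists_card_fiber_le_of_card_le_nsmul
    (f := fun x : Fin n → Bool => (cubeWeight x : ZMod 3)) (b := (2 ^ n / 3 : ℚ))
    (by simp [mul_div_cancel₀])
  refine ⟨r, ?_⟩
  have hsplit :
      #{x : Fin n → Bool | (cubeWeight x : ZMod 3) = r} + #(weightAvoiding n r) = 2 ^ n :=
    (card_filter_add_card_filter_not _).trans (by simp)
  have hr' : 3 * #{x : Fin n → Bool | (cubeWeight x : ZMod 3) = r} ≤ 2 ^ n := by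
    rw [le_div_iff₀' (by norm_num)] at hr
    exact_mod_cast hr
  rw [pow_succ]
  omega

end Weight

theorem mem_iff_antipode_mem_of_card_eq_three {F F' : Finset (Bool × Bool)} (hF : #F = 3)
    (hF' : #F' = 3) (hfst : ∀ b, ¬∀ a, (a, b) ∈ F ∧ (a, b) ∈ F')
    (hsnd : ∀ a, ¬∀ b, (a, b) ∈ F ∧ (a, b) ∈ F') (p : Bool × Bool) :
    p ∈ F' ↔ (!p.1, !p.2) ∈ F := by
  revert F F' p
  decide

theorem exists_antipodal_pair_of_card_eq_three {F : Finset (Bool × Bool)} (hF : #F = 3) :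
    ∃ p ∈ F, (!p.1, !p.2) ∈ F := by
  revert F
  decide

theorem update_cons_cons_one {α : Type*} {m : ℕ} (a b c : α) (v : Fin m → α) :
    update (Fin.cons a (Fin.cons b v) : Fin (m + 2) → α) 1 c = Fin.cons a (Fin.cons c v) := by
  rw [← Fin.succ_zero_eq_one, ← Fin.cons_update, Fin.update_cons_zero]

section Fiber

variable {m : ℕ} {S : Finset (Fin (m + 2) → Bool)}

def fiber (S : Finset (Fin (m + 2) → Bool)) (v : Fin m → Bool) : Finset (Bool × Bool) :=
  {p | Fin.cons p.1 (Fin.cons p.2 v) ∈ S}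

theorem mem_fiber {v : Fin m → Bool} {p : Bool × Bool} :
    p ∈ fiber S v ↔ Fin.cons p.1 (Fin.cons p.2 v) ∈ S := by
  simp [fiber]

theorem sum_card_fiber (S : Finset (Fin (m + 2) → Bool)) : ∑ v, #(fiber S v) = #S := by
  have hcons : ∀ {k : ℕ} (f : (Fin (k + 1) → Bool) → ℕ),
      ∑ x, f x = ∑ a, ∑ w, f (Fin.cons a w) :=
    fun f => by rw [← (Fin.consEquiv _).sum_comp, Fintype.sum_prod_type]; rfl
  simp only [fiber, card_filter, Fintype.sum_prod_type]
  have hS : #S = ∑ x, if x ∈ S then 1 else 0 := by simp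
  rw [sum_comm, hS, hcons, sum_congr rfl fun a _ => hcons _]
  exact sum_congr rfl fun a _ => sum_comm

theorem card_fiber_le_three (hS : ¬HasSquare (S : Set (Fin (m + 2) → Bool)))
    (v : Fin m → Bool) : #(fiber S v) ≤ 3 := by
  have hne : fiber S v ≠ univ := by
    intro h
    refine hS ⟨Fin.cons false (Fin.cons false v), 0, Fin.succ 0, (Fin.succ_ne_zero 0).symm,
      fun a b => ?_⟩
    have hab : (a, b) ∈ fiber S v := h ▸ mem_univ _
    simpa [update_cons_cons_one, mem_fiber] using hab
  have := (card_lt_iff_ne_univ _).mpr hne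
  simp only [Fintype.card_prod, Fintype.card_bool] at this
  omega

theorem mem_fiber_update_iff (hS : ¬HasSquare (S : Set (Fin (m + 2) → Bool)))
    (v : Fin m → Bool) (k : Fin m) (h₀ : #(fiber S (update v k false)) = 3)
    (h₁ : #(fiber S (update v k true)) = 3) (p : Bool × Bool) :
    p ∈ fiber S (update v k true) ↔ (!p.1, !p.2) ∈ fiber S (update v k false) := by
  refine mem_iff_antipode_mem_of_card_eq_three h₀ h₁ (fun b h => hS ?_) (fun a h => hS ?_) p
  · refine ⟨Fin.cons false (Fin.cons b v), k.succ.succ, 0, Fin.succ_ne_zero _, fun α β => ?_⟩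
    simp only [mem_fiber] at h
    cases α
    exacts [by simpa [← Fin.cons_update] using (h β).1,
      by simpa [← Fin.cons_update] using (h β).2]
  · refine ⟨Fin.cons a (Fin.cons false v), k.succ.succ, Fin.succ 0,
      (Fin.succ_injective _).ne (Fin.succ_ne_zero _), fun α β => ?_⟩
    simp only [mem_fiber] at h
    cases α
    exacts [by simpa [← Fin.cons_update, update_cons_cons_one] using (h β).1,
      by simpa [← Fin.cons_update, update_cons_cons_one] using (h β).2]

def fullFibers (S : Finset (Fin (m + 2) → Bool)) : Finset (Fin m → Bool) :=
  {v | #(fiber S v) = 3}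

theorem not_hasSquare_fullFibers (hS : ¬HasSquare (S : Set (Fin (m + 2) → Bool))) :
    ¬HasSquare (fullFibers S : Set (Fin m → Bool)) := by
  rintro ⟨x, i, j, hij, hx⟩
  have h3 : ∀ a b, #(fiber S (update (update x i a) j b)) = 3 := fun a b => by
    simpa [fullFibers] using hx a b
  have flip_i : ∀ b p, p ∈ fiber S (update (update x i true) j b)
      ↔ (!p.1, !p.2) ∈ fiber S (update (update x i false) j b) := fun b => by
    simp only [update_comm hij]
    exact mem_fiber_update_iff hS _ i (by simpa [update_comm hij] using h3 false b)
      (by simpa [update_comm hij] using h3 true b)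
  have flip_j : ∀ a p, p ∈ fiber S (update (update x i a) j true)
      ↔ (!p.1, !p.2) ∈ fiber S (update (update x i a) j false) := fun a =>
    mem_fiber_update_iff hS _ j (h3 a false) (h3 a true)
  obtain ⟨p, hp, hp'⟩ := exists_antipodal_pair_of_card_eq_three (h3 false false)
  refine hS ⟨Fin.cons p.1 (Fin.cons p.2 x), i.succ.succ, j.succ.succ,
    (Fin.succ_injective _).ne ((Fin.succ_injective _).ne hij), fun a b => ?_⟩
  have hpab : p ∈ fiber S (update (update x i a) j b) := by
    cases a <;> cases b <;> simp [flip_i, flip_j, hp, hp']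
  simpa [← Fin.cons_update, mem_fiber] using hpab

theorem card_le_two_mul_add_card_fullFibers (hS : ¬HasSquare (S : Set (Fin (m + 2) → Bool))) :
    #S ≤ 2 * 2 ^ m + #(fullFibers S) := by
  calc #S = ∑ v, #(fiber S v) := (sum_card_fiber S).symm
    _ ≤ ∑ v, (2 + if #(fiber S v) = 3 then 1 else 0) := sum_le_sum fun v _ => by
      have := card_fiber_le_three hS v
      split_ifs <;> omega
    _ = 2 * 2 ^ m + #(fullFibers S) := by
      simp [sum_add_distrib, fullFibers, mul_comm]

end Fiber

theorem three_mul_card_le_of_not_hasSquare :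
    ∀ {n : ℕ} (S : Finset (Fin n → Bool)), ¬HasSquare (S : Set (Fin n → Bool)) →
      3 * #S ≤ 2 ^ (n + 1) + 2
  | 0, S, _ | 1, S, _ => by
    have := card_le_univ S
    simp only [Fintype.card_fun, Fintype.card_bool, Fintype.card_fin] at this
    simp only [zero_add, pow_one] at this ⊢
    omega
  | m + 2, S, hS => by
    have hU := three_mul_card_le_of_not_hasSquare _ (not_hasSquare_fullFibers hS)
    have hS' := card_le_two_mul_add_card_fullFibers hS
    simp only [pow_succ] at hU ⊢
    omega

theorem Nat.ceil_natCast_div_three (N : ℕ) : ⌈(N : ℚ) / 3⌉₊ = (N + 2) / 3 := by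
  apply le_antisymm
  · rw [Nat.ceil_le, div_le_iff₀ (by norm_num)]
    exact_mod_cast (by omega : N ≤ (N + 2) / 3 * 3)
  · have hq : (N : ℚ) ≤ ⌈(N : ℚ) / 3⌉₊ * 3 :=
      (div_le_iff₀ (by norm_num)).mp (Nat.le_ceil _)
    have : N ≤ ⌈(N : ℚ) / 3⌉₊ * 3 := by exact_mod_cast hq
    omega

theorem kostochka_general (n : ℕ) :
    exc n (Set.univ : Set (Fin 2 → Bool)) = ⌈(2 ^ (n + 1) : ℚ) / 3⌉₊ := by
  have hceil : ⌈(2 ^ (n + 1) : ℚ) / 3⌉₊ = (2 ^ (n + 1) + 2) / 3 := by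
    exact_mod_cast Nat.ceil_natCast_div_three (2 ^ (n + 1))
  have hupper : ∀ S : Finset (Fin n → Bool),
      IsFree (Set.univ : Set (Fin 2 → Bool)) (S : Set (Fin n → Bool)) →
        #S ≤ (2 ^ (n + 1) + 2) / 3 := fun S hS => by
    have := three_mul_card_le_of_not_hasSquare S (isFree_univ_iff_not_hasSquare.mp hS)
    omega
  obtain ⟨r, hr⟩ := exists_card_weightAvoiding n
  have hfree := isFree_univ_iff_not_hasSquare.mpr (not_hasSquare_weightAvoiding (n := n) r)
  rw [hceil, exc]
  refine IsGreatest.csSup_eq ⟨⟨_, hfree, ?_⟩, ?_⟩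
  · have := hupper _ hfree
    omega
  · rintro _ ⟨S, hS, rfl⟩
    exact hupper S hS

/-- Kostochka's theorem: for n ≥ 2 the maximum size of a subset of {0,1}^n containing no
embedded copy of the full 2-dimensional subcube is ⌈2^(n+1)/3⌉. -/
theorem kostochka (n : ℕ) (hn : 2 ≤ n) :
    exc n (Set.univ : Set (Fin 2 → Bool)) = ⌈(2 ^ (n + 1) : ℚ) / 3⌉₊ :=
  kostochka_general n
end

section
/- λ(F_1) = 1/2, where F_1 = {(0,0,0),(1,0,0),(0,1,0),(0,0,1)} ⊆ V_3; that is, exc(n, F_1)/2^n → 1/2 as n → ∞. -/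
/-!
Lower bound: adjacent vertices have weights of opposite parity and `F₁` contains an edge, so the
odd-weight vertices, half of the cube, form an `F₁`-free set.

Upper bound: if a vertex `x` of an `F₁`-free set `S` had neighbours `x + e_a, x + e_b, x + e_c` in
`S`, the subcube through `x` in the directions `a, b, c` would carry a copy of `F₁` inside `S`.
So every vertex of `S` has at least `n - 2` neighbours outside `S`, and counting the edges between
`S` and its complement gives `(n - 2) |S| ≤ n (2ⁿ - |S|)`, that is `|S| / 2ⁿ ≤ n / (2n - 2)`.
-/

open Finset Filter Topology

/-- F₁ = {(0,0,0),(1,0,0),(0,1,0),(0,0,1)} ⊆ V₃. -/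
def F1 : Set (Fin 3 → Bool) :=
  {![false, false, false], ![true, false, false], ![false, true, false], ![false, false, true]}

/-- F₂ = {(0,0,0),(1,1,0),(1,0,1),(0,1,1)} ⊆ V₃. -/
def F2 : Set (Fin 3 → Bool) :=
  {![false, false, false], ![true, true, false], ![true, false, true], ![false, true, true]}

/-- F₃ = {(0,0,0),(1,1,1)} ⊆ V₃. -/
def F3 : Set (Fin 3 → Bool) :=
  {![false, false, false], ![true, true, true]}

section Cube

variable {n d : ℕ}

def flipBit (j : Fin n) (x : Fin n → Bool) : Fin n → Bool :=
  Function.update x j (!x j)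

lemma flipBit_involutive (j : Fin n) : Function.Involutive (flipBit j) := by
  intro x
  simp [flipBit]

lemma hammingDist_flipBit (j : Fin n) (x : Fin n → Bool) : hammingDist x (flipBit j x) = 1 := by
  rw [hammingDist, card_eq_one]
  refine ⟨j, ?_⟩
  ext k
  simp only [mem_filter, mem_univ, true_and, mem_singleton, flipBit, Function.update_apply]
  split_ifs <;> simp_all

lemma card_mul_le_card_compl_add (S : Finset (Fin n → Bool)) (D : ℕ)
    (hD : ∀ x ∈ S, #{j | flipBit j x ∈ S} ≤ D) :
    n * #S ≤ n * #Sᶜ + D * #S := by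
  have h_split : ∀ x, #{j | flipBit j x ∈ S} + #{j | flipBit j x ∉ S} = n := fun x => by
    simpa using card_filter_add_card_filter_not (s := univ) fun j => flipBit j x ∈ S
  have h_out : ∀ j : Fin n, #{x ∈ S | flipBit j x ∉ S} ≤ #Sᶜ := fun j =>
    card_le_card_of_injOn (flipBit j) (fun x hx => by simp_all)
      ((flipBit_involutive j).injective.injOn)
  calc n * #S = ∑ x ∈ S, (#{j | flipBit j x ∈ S} + #{j | flipBit j x ∉ S}) := by
        simp [h_split, mul_comm]
    _ ≤ ∑ x ∈ S, (D + #{j | flipBit j x ∉ S}) := sum_le_sum fun x hx => by gcongr; exact hD x hx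
    _ = D * #S + ∑ j : Fin n, #{x ∈ S | flipBit j x ∉ S} := by
        rw [sum_add_distrib, sum_const, smul_eq_mul, mul_comm]
        congr 1
        exact sum_card_bipartiteAbove_eq_sum_card_bipartiteBelow (fun x j => flipBit j x ∉ S)
    _ ≤ D * #S + ∑ _j : Fin n, #Sᶜ := add_le_add_right (sum_le_sum fun j _ => h_out j) _
    _ = n * #Sᶜ + D * #S := by simp [add_comm]

lemma cubeWeight_add_cubeWeight (x y : Fin n → Bool) :
    cubeWeight x + cubeWeight y = hammingDist x y + 2 * #{i | x i = true ∧ y i = true} := by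
  simp only [cubeWeight, hammingDist, card_filter, mul_sum, ← sum_add_distrib]
  refine sum_congr rfl fun i _ => ?_
  cases x i <;> cases y i <;> rfl

lemma odd_cubeWeight_add_of_hammingDist_eq_one {x y : Fin n → Bool} (h : hammingDist x y = 1) :
    Odd (cubeWeight x + cubeWeight y) := by
  rw [cubeWeight_add_cubeWeight, h]
  exact odd_one.add_even (even_two_mul _)

lemma odd_cubeWeight_flipBit_iff (j : Fin n) (x : Fin n → Bool) :
    Odd (cubeWeight (flipBit j x)) ↔ ¬ Odd (cubeWeight x) := by
  have h := odd_cubeWeight_add_of_hammingDist_eq_one (hammingDist_flipBit j x)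
  rwa [Nat.odd_add', ← Nat.not_odd_iff_even] at h

lemma card_filter_odd_cubeWeight (n : ℕ) :
    #{x : Fin (n + 1) → Bool | Odd (cubeWeight x)} = 2 ^ n := by
  have h_swap : #{x : Fin (n + 1) → Bool | Odd (cubeWeight x)} =
      #{x : Fin (n + 1) → Bool | ¬ Odd (cubeWeight x)} := by
    refine card_nbij' (flipBit 0) (flipBit 0) ?_ ?_ (fun x _ => flipBit_involutive 0 x)
      (fun x _ => flipBit_involutive 0 x) <;>
    · intro x
      simp only [coe_filter, mem_univ, true_and, Set.mem_ofPred_eq, odd_cubeWeight_flipBit_iff]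
      tauto
  have h_total := card_filter_add_card_filter_not
    (s := (univ : Finset (Fin (n + 1) → Bool))) (fun x => Odd (cubeWeight x))
  simp only [card_univ, Fintype.card_fun, Fintype.card_bool, Fintype.card_fin] at h_total
  rw [pow_succ] at h_total
  omega

/-- `y ↦ x + ∑ₘ y m • e_(g m)`: the copy of `Q_d` through `x` in the directions `g`. -/
noncomputable def subcubeMap (x : Fin n → Bool) (g : Fin d → Fin n) (y : Fin d → Bool) :
    Fin n → Bool :=
  fun k => xor (x k) (Function.extend g y (fun _ => false) k)

lemma hammingDist_subcubeMap (x : Fin n → Bool) {g : Fin d → Fin n} (hg : g.Injective)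
    (y y' : Fin d → Bool) :
    hammingDist (subcubeMap x g y) (subcubeMap x g y') = hammingDist y y' := by
  unfold subcubeMap
  rw [hammingDist_comp (fun k => xor (x k)) (fun k => by cases x k <;> decide), hammingDist,
    hammingDist, ← card_map ⟨g, hg⟩]
  congr 1
  ext k
  by_cases hk : ∃ m, g m = k
  · obtain ⟨m, rfl⟩ := hk
    simp [hg.extend_apply]
  · simp_all

lemma isCubeEmbedding_subcubeMap (x : Fin n → Bool) {g : Fin d → Fin n} (hg : g.Injective) :
    IsCubeEmbedding (subcubeMap x g) := by
  refine ⟨fun y y' h => ?_, fun y y' h => by rwa [hammingDist_subcubeMap x hg]⟩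
  rw [← hammingDist_eq_zero, ← hammingDist_subcubeMap x hg, h, hammingDist_self]

lemma subcubeMap_false (x : Fin n → Bool) (g : Fin d → Fin n) :
    subcubeMap x g (fun _ => false) = x := by
  ext k
  simp only [subcubeMap, Function.extend_const, Bool.xor_false]

lemma subcubeMap_update_false (x : Fin n → Bool) {g : Fin d → Fin n} (hg : g.Injective)
    (m : Fin d) : subcubeMap x g (Function.update (fun _ => false) m true) = flipBit (g m) x := by
  ext k
  by_cases hk : ∃ m', g m' = k
  · obtain ⟨m', rfl⟩ := hk
    by_cases hm : m' = m
    · subst hm; simp [subcubeMap, hg.extend_apply, flipBit]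
    · simp [subcubeMap, hg.extend_apply, flipBit, hm, hg.ne hm]
  · have hkm : k ≠ g m := fun h => hk ⟨m, h.symm⟩
    simp [subcubeMap, Function.extend_apply' _ _ _ hk, flipBit, hkm]

end Cube

section Exc

variable {n d : ℕ} {F : Set (Fin d → Bool)}

lemma bddAbove_card_isFree :
    BddAbove {k | ∃ S : Finset (Fin n → Bool), IsFree F (S : Set (Fin n → Bool)) ∧ #S = k} := by
  refine ⟨2 ^ n, ?_⟩
  rintro k ⟨S, -, rfl⟩
  simpa using card_le_univ S

lemma card_le_exc {S : Finset (Fin n → Bool)} (hS : IsFree F (S : Set (Fin n → Bool))) :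
    #S ≤ exc n F :=
  le_csSup bddAbove_card_isFree ⟨S, hS, rfl⟩

lemma exists_isFree_card_eq_exc (hF : F.Nonempty) :
    ∃ S : Finset (Fin n → Bool), IsFree F (S : Set (Fin n → Bool)) ∧ #S = exc n F := by
  have h_empty : IsFree F ((∅ : Finset (Fin n → Bool)) : Set (Fin n → Bool)) :=
    fun i _ h => by simpa using (hF.image i).mono h
  refine Nat.sSup_mem ?_ bddAbove_card_isFree
  exact ⟨0, ∅, h_empty, card_empty⟩

lemma isFree_of_hammingDist_ne_one {a b : Fin d → Bool} (ha : a ∈ F) (hb : b ∈ F)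
    (hab : hammingDist a b = 1) {S : Set (Fin n → Bool)}
    (hS : ∀ x ∈ S, ∀ y ∈ S, hammingDist x y ≠ 1) : IsFree F S :=
  fun i hi h =>
    hS _ (h (Set.mem_image_of_mem i ha)) _ (h (Set.mem_image_of_mem i hb)) (hi.2 a b hab)

end Exc

lemma F1_eq_insert_range :
    F1 = insert (fun _ => false)
      (Set.range fun m : Fin 3 => Function.update (fun _ => false) m true) := by
  have h0 : (![false, false, false] : Fin 3 → Bool) = fun _ => false := by decide
  have h1 : ![true, false, false] = Function.update (fun _ => false) 0 true := by decide
  have h2 : ![false, true, false] = Function.update (fun _ => false) 1 true := by decide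
  have h3 : ![false, false, true] = Function.update (fun _ => false) 2 true := by decide
  rw [F1, h0, h1, h2, h3]
  ext w
  simp [Fin.exists_fin_succ, eq_comm (b := w)]

lemma card_filter_flipBit_mem_le_two_of_isFree_F1 {n : ℕ} {S : Finset (Fin n → Bool)}
    (hS : IsFree F1 (S : Set (Fin n → Bool))) {x : Fin n → Bool} (hx : x ∈ S) :
    #{j | flipBit j x ∈ S} ≤ 2 := by
  by_contra! h
  set s : Finset (Fin n) := {j | flipBit j x ∈ S}
  let g : Fin 3 → Fin n := s.orderEmbOfFin rfl ∘ Fin.castLE h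
  have hg : g.Injective := (s.orderEmbOfFin rfl).injective.comp (Fin.castLE_injective h)
  refine hS _ (isCubeEmbedding_subcubeMap x hg) ?_
  rw [F1_eq_insert_range, Set.image_insert_eq, ← Set.range_comp, Set.insert_subset_iff,
    subcubeMap_false, Set.range_subset_iff]
  refine ⟨hx, fun m => ?_⟩
  rw [Function.comp_apply, subcubeMap_update_false x hg]
  exact (mem_filter.1 (s.orderEmbOfFin_mem rfl _)).2

lemma two_pow_le_exc_F1 (n : ℕ) : 2 ^ n ≤ exc (n + 1) F1 := by
  have h_free : IsFree F1 (({x | Odd (cubeWeight x)} : Finset (Fin (n + 1) → Bool)) :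
      Set (Fin (n + 1) → Bool)) := by
    refine isFree_of_hammingDist_ne_one (a := ![false, false, false]) (b := ![true, false, false])
      (by simp [F1]) (by simp [F1]) (by decide) fun x hx y hy hxy => ?_
    simp only [coe_filter, mem_univ, true_and, Set.mem_ofPred_eq] at hx hy
    exact Nat.not_even_iff_odd.2 (odd_cubeWeight_add_of_hammingDist_eq_one hxy) (hx.add_odd hy)
  exact card_filter_odd_cubeWeight n ▸ card_le_exc h_free

lemma exc_F1_le (n : ℕ) : 2 * n * exc n F1 ≤ (n + 2) * 2 ^ n := by
  obtain ⟨S, hS, h_card⟩ := exists_isFree_card_eq_exc (n := n) (F := F1) ⟨_, Set.mem_insert _ _⟩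
  rw [← h_card]
  have h_count := card_mul_le_card_compl_add S 2 fun x hx =>
    card_filter_flipBit_mem_le_two_of_isFree_F1 hS hx
  have h_total : #S + #Sᶜ = 2 ^ n := by simp [card_add_card_compl]
  nlinarith

/-- λ(F₁) = 1/2. -/
theorem lambda_F1 :
    Filter.Tendsto (fun n : ℕ => (exc n F1 : ℝ) / 2 ^ n) Filter.atTop (𝓝 (1 / 2)) := by
  have h_lower : ∀ᶠ n : ℕ in atTop, 1 / 2 ≤ (exc n F1 : ℝ) / 2 ^ n := by
    filter_upwards [eventually_ge_atTop 1] with n hn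
    obtain ⟨m, rfl⟩ := Nat.exists_eq_add_of_le' hn
    have h : (2 : ℝ) ^ m ≤ exc (m + 1) F1 := mod_cast two_pow_le_exc_F1 m
    rw [le_div_iff₀ (by positivity), pow_succ]
    linarith
  have h_upper : ∀ᶠ n : ℕ in atTop, (exc n F1 : ℝ) / 2 ^ n ≤ 1 / 2 + 1 / n := by
    filter_upwards [eventually_gt_atTop 0] with n hn
    have h : 2 * (n : ℝ) * exc n F1 ≤ (n + 2) * 2 ^ n := mod_cast exc_F1_le n
    rw [div_le_iff₀ (by positivity)]
    field_simp
    linarith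
  have h_lim : Tendsto (fun n : ℕ => 1 / 2 + 1 / (n : ℝ)) atTop (𝓝 (1 / 2)) := by
    simpa using (tendsto_const_nhds (x := (1 / 2 : ℝ))).add tendsto_one_div_atTop_nhds_zero_nat
  exact tendsto_of_tendsto_of_tendsto_of_le_of_le' tendsto_const_nhds h_lim h_lower h_upper
end

section
/- λ(F_3) = 1/2, where F_3 = {(0,0,0),(1,1,1)} ⊆ V_3; that is, exc(n, F_3)/2^n → 1/2 as n → ∞. -/
open Finset Filter Topology

/-!
Every edge of `Q_n` changes the parity of the weight, and `(0,0,0)`, `(1,1,1)` are joined by a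
path of length three in `Q_3`; so every embedded copy of `F₃` has one vertex of each parity, and
the even-weight vertices form an `F₃`-free set of size `2^(n-1)`. Conversely, a vertex `x` and
the vertex obtained by flipping its first three coordinates form a copy of `F₃` (in the subcube
through `x` spanned by those coordinates). Flipping is an involution, so an `F₃`-free set and
its image are disjoint and it has at most `2^(n-1)` elements. Hence `exc n F₃ = 2^(n-1)` for
all `n ≥ 3`.
-/

open Function

lemma hammingDist_extend {ι κ β : Type*} [Fintype ι] [Fintype κ] [DecidableEq κ] [DecidableEq β]
    {f : ι → κ} (hf : Injective f) (a b : ι → β) (c : κ → β) :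
    hammingDist (extend f a c) (extend f b c) = hammingDist a b := by
  rw [hammingDist, hammingDist, ← card_image_of_injective _ hf]
  congr 1
  ext j
  by_cases hj : ∃ i, f i = j
  · obtain ⟨i, rfl⟩ := hj
    simp [hf.extend_apply, hf.eq_iff]
  · simp only [mem_filter, mem_univ, true_and, extend_apply' _ _ _ hj, ne_eq, not_true_eq_false,
      false_iff, mem_image, not_exists, not_and]
    exact fun i _ hi => hj ⟨i, hi⟩

lemma two_mul_card_le_of_forall_apply_notMem {α : Type*} [Fintype α] [DecidableEq α]
    {σ : α → α} (hσ : Injective σ) {S : Finset α} (h : ∀ x ∈ S, σ x ∉ S) :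
    2 * #S ≤ Fintype.card α := by
  have hdisj : Disjoint S (S.image σ) := by
    rw [disjoint_left]
    intro y hy hy'
    obtain ⟨x, hx, rfl⟩ := mem_image.1 hy'
    exact h x hx hy
  calc 2 * #S = #(S ∪ S.image σ) := by
        rw [card_union_of_disjoint hdisj, card_image_of_injective _ hσ, two_mul]
    _ ≤ Fintype.card α := card_le_univ _

section Cube

variable {d n : ℕ}

lemma cast_hammingDist_eq_add (x y : Fin n → Bool) :
    (hammingDist x y : ZMod 2) = cubeWeight x + cubeWeight y := by
  simp only [hammingDist, cubeWeight, card_filter]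
  push_cast
  rw [← sum_add_distrib]
  refine sum_congr rfl fun i _ => ?_
  cases x i <;> cases y i <;> decide

lemma cubeWeight_add_eq_one_of_hammingDist_eq_one {x y : Fin n → Bool}
    (h : hammingDist x y = 1) : (cubeWeight x : ZMod 2) + cubeWeight y = 1 := by
  rw [← cast_hammingDist_eq_add, h, Nat.cast_one]

/-- The copy of `Q_d` in `Q_n` through `x` spanned by the coordinates in the image of `f`. -/
noncomputable def cubeShift (x : Fin n → Bool) (f : Fin d → Fin n) (a : Fin d → Bool) :
    Fin n → Bool :=
  fun j => xor (x j) (extend f a (fun _ => false) j)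

lemma hammingDist_cubeShift (x : Fin n → Bool) {f : Fin d → Fin n} (hf : Injective f)
    (a b : Fin d → Bool) : hammingDist (cubeShift x f a) (cubeShift x f b) = hammingDist a b := by
  unfold cubeShift
  rw [hammingDist_comp (fun j => xor (x j)) (fun j => ?_), hammingDist_extend hf]
  cases x j <;> decide

lemma isCubeEmbedding_cubeShift (x : Fin n → Bool) {f : Fin d → Fin n} (hf : Injective f) :
    IsCubeEmbedding (cubeShift x f) := by
  refine ⟨fun a b hab => ?_, fun a b h => by rwa [hammingDist_cubeShift x hf]⟩
  rw [← hammingDist_eq_zero, ← hammingDist_cubeShift x hf, hab, hammingDist_self]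

lemma cubeShift_false (x : Fin n → Bool) (f : Fin d → Fin n) :
    cubeShift x f (fun _ => false) = x := by
  funext j
  simp [cubeShift, extend_const]

lemma involutive_cubeShift (f : Fin d → Fin n) (a : Fin d → Bool) :
    Involutive fun x => cubeShift x f a := by
  intro x
  funext j
  simp [cubeShift]

lemma cubeWeight_add_cubeWeight_cubeShift_true (x : Fin n → Bool) {f : Fin d → Fin n}
    (hf : Injective f) :
    (cubeWeight x : ZMod 2) + cubeWeight (cubeShift x f fun _ => true) = d := by
  rw [← cast_hammingDist_eq_add]
  conv_lhs => enter [1, 1]; rw [← cubeShift_false x f]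
  rw [hammingDist_cubeShift x hf]
  simp [hammingDist]

end Cube

section F3

variable {n : ℕ}

lemma image_F3_subset_iff {i : (Fin 3 → Bool) → Fin n → Bool} {S : Set (Fin n → Bool)} :
    i '' F3 ⊆ S ↔ i (fun _ => false) ∈ S ∧ i (fun _ => true) ∈ S := by
  have h₀ : ![false, false, false] = fun _ => false := by ext k; fin_cases k <;> rfl
  have h₁ : ![true, true, true] = fun _ => true := by ext k; fin_cases k <;> rfl
  rw [F3, Set.image_pair, Set.pair_subset_iff, h₀, h₁]

lemma cubeWeight_add_cubeWeight_of_isCubeEmbedding {i : (Fin 3 → Bool) → Fin n → Bool}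
    (hi : IsCubeEmbedding i) :
    (cubeWeight (i fun _ => false) : ZMod 2) + cubeWeight (i fun _ => true) = 1 := by
  have e₁ := cubeWeight_add_eq_one_of_hammingDist_eq_one
    (hi.2 (fun _ => false) ![true, false, false] (by decide))
  have e₂ := cubeWeight_add_eq_one_of_hammingDist_eq_one
    (hi.2 ![true, false, false] ![true, true, false] (by decide))
  have e₃ := cubeWeight_add_eq_one_of_hammingDist_eq_one
    (hi.2 ![true, true, false] (fun _ => true) (by decide))
  have key : ∀ a b c d : ZMod 2, a + b = 1 → b + c = 1 → c + d = 1 → a + d = 1 := by decide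
  exact key _ _ _ _ e₁ e₂ e₃

lemma cubeShift_true_notMem_of_isFree_F3 {S : Set (Fin n → Bool)} (hS : IsFree F3 S)
    {f : Fin 3 → Fin n} (hf : Injective f) {x : Fin n → Bool} (hx : x ∈ S) :
    cubeShift x f (fun _ => true) ∉ S := fun hy =>
  hS _ (isCubeEmbedding_cubeShift x hf) (image_F3_subset_iff.2 ⟨by rwa [cubeShift_false], hy⟩)

lemma two_mul_card_le_of_isFree_F3 (h3 : 3 ≤ n) {S : Finset (Fin n → Bool)}
    (hS : IsFree F3 (S : Set (Fin n → Bool))) : 2 * #S ≤ 2 ^ n := by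
  simpa using two_mul_card_le_of_forall_apply_notMem
    (involutive_cubeShift (Fin.castLE h3) fun _ => true).injective
    fun x hx => cubeShift_true_notMem_of_isFree_F3 hS (Fin.castLE_injective h3) hx

def evenWeightSet (n : ℕ) : Finset (Fin n → Bool) :=
  univ.filter fun x => (cubeWeight x : ZMod 2) = 0

lemma isFree_F3_evenWeightSet : IsFree F3 (evenWeightSet n : Set (Fin n → Bool)) := by
  intro i hi hsub
  obtain ⟨h₀, h₁⟩ := image_F3_subset_iff.1 hsub
  simp only [evenWeightSet, coe_filter, mem_univ, true_and, Set.mem_ofPred_eq] at h₀ h₁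
  simpa [h₀, h₁] using cubeWeight_add_cubeWeight_of_isCubeEmbedding hi

lemma two_mul_card_evenWeightSet (h3 : 3 ≤ n) : 2 * #(evenWeightSet n) = 2 ^ n := by
  set σ := fun x => cubeShift x (Fin.castLE h3) fun _ => true
  have hσ : Injective σ := (involutive_cubeShift _ _).injective
  have hparity (x : Fin n → Bool) :
      (cubeWeight x : ZMod 2) = 0 ↔ (cubeWeight (σ x) : ZMod 2) ≠ 0 := by
    have h := cubeWeight_add_cubeWeight_cubeShift_true x (Fin.castLE_injective h3)
    have key : ∀ a b : ZMod 2, a + b = (3 : ℕ) → (a = 0 ↔ b ≠ 0) := by decide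
    exact key _ _ h
  have hE := two_mul_card_le_of_forall_apply_notMem hσ (S := evenWeightSet n) fun x hx => by
    simp only [evenWeightSet, mem_filter, mem_univ, true_and] at hx ⊢
    exact (hparity x).1 hx
  have hO := two_mul_card_le_of_forall_apply_notMem hσ (S := (evenWeightSet n)ᶜ) fun x hx => by
    simp only [evenWeightSet, mem_compl, mem_filter, mem_univ, true_and, not_not] at hx ⊢
    exact not_not.1 (mt (hparity x).2 hx)
  rw [card_compl] at hO
  have : #(evenWeightSet n) ≤ Fintype.card (Fin n → Bool) := card_le_univ _
  simp only [Fintype.card_fun, Fintype.card_bool, Fintype.card_fin] at *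
  omega

lemma two_mul_exc_F3 (h3 : 3 ≤ n) : 2 * exc n F3 = 2 ^ n := by
  have hgreatest : IsGreatest {k | ∃ S : Finset (Fin n → Bool),
      IsFree F3 (S : Set (Fin n → Bool)) ∧ #S = k} #(evenWeightSet n) := by
    refine ⟨⟨evenWeightSet n, isFree_F3_evenWeightSet, rfl⟩, ?_⟩
    rintro _ ⟨S, hS, rfl⟩
    have := two_mul_card_le_of_isFree_F3 h3 hS
    have := two_mul_card_evenWeightSet h3
    omega
  rw [exc, hgreatest.csSup_eq, two_mul_card_evenWeightSet h3]

end F3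

/-- λ(F₃) = 1/2. -/
theorem lambda_F3 :
    Filter.Tendsto (fun n : ℕ => (exc n F3 : ℝ) / 2 ^ n) Filter.atTop (𝓝 (1 / 2)) := by
  refine tendsto_const_nhds.congr' (eventually_atTop.2 ⟨3, fun n h3 => ?_⟩)
  have h : (2 : ℝ) * exc n F3 = 2 ^ n := by exact_mod_cast two_mul_exc_F3 h3
  field_simp
  linarith
end

section
/- For every integer d ≥ 2, λ(𝓕_{d, C(d,⌊d/2⌋)+1}) ≥ 1/(d+1) > 0, where C(d,⌊d/2⌋) is the binomial coefficient. Consequently μ(d) := max{t : λ(𝓕_{d,t}) = 0} satisfies μ(d) ≤ C(d,⌊d/2⌋). Indeed, for every n ≥ d the set S = {x ∈ V_n : |x| ≡ 0 (mod d+1)} is 𝓕_{d, C(d,⌊d/2⌋)+1}-free: it contains vertices from at most one layer of the image of any embedding of Q_d into Q_n, hence at most C(d,⌊d/2⌋) such vertices. -/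
open Finset Filter Topology

/-- `excT n d t`: the maximum size of a subset of V_n that is 𝓕_{d,t}-free, i.e. F-free for
every F ⊆ V_d with |F| = t. -/
noncomputable def excT (n d t : ℕ) : ℕ :=
  sSup {k : ℕ | ∃ S : Finset (Fin n → Bool),
    (∀ F : Set (Fin d → Bool), F.ncard = t → IsFree F (S : Set (Fin n → Bool))) ∧ S.card = k}

/-!
An embedding `i : Q_d → Q_n` is rigid: toggling coordinate `j` of `x` toggles a coordinate
`δ j` of `i x` that does not depend on `x` (a 4-cycle argument), and `δ` is injective. Hence
`|i x| = c + dist(x, t)` for a constant `c` and a fixed `t ∈ V_d`. The weights on a copy of `Q_d`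
therefore range over an interval of length `d`, so a residue class mod `d + 1` meets the copy
in a single weight, i.e. in a Hamming sphere of `Q_d`, which has at most `C(d, ⌊d/2⌋)` points.
Pigeonholing over the `d + 1` residue classes gives `2^n / (d + 1)` as a lower bound for the
extremal number, and the density is non-increasing because `Q_{n+1}` is two copies of `Q_n`.
-/

namespace Hypercube

variable {ι : Type*} [DecidableEq ι]

def toggle (j : ι) (x : ι → Bool) : ι → Bool :=
  Function.update x j (!x j)

@[simp]
lemma toggle_apply_self (j : ι) (x : ι → Bool) : toggle j x j = !x j := by
  simp [toggle]

@[simp]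
lemma toggle_apply_of_ne {j m : ι} (x : ι → Bool) (h : m ≠ j) : toggle j x m = x m := by
  simp [toggle, h]

lemma toggle_apply (j : ι) (x : ι → Bool) (m : ι) :
    toggle j x m = if m = j then !x j else x m := by
  split_ifs with h
  · subst h; simp
  · simp [h]

@[simp]
lemma toggle_toggle (j : ι) (x : ι → Bool) : toggle j (toggle j x) = x := by
  funext m; by_cases h : m = j <;> simp [h]

lemma toggle_comm (j k : ι) (x : ι → Bool) : toggle j (toggle k x) = toggle k (toggle j x) := by
  funext m; by_cases hj : m = j <;> by_cases hk : m = k <;> simp_all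

lemma toggle_toggle_eq_self_iff {j k : ι} {x : ι → Bool} :
    toggle j (toggle k x) = x ↔ j = k := by
  refine ⟨fun h => ?_, fun h => h ▸ toggle_toggle j x⟩
  by_contra hjk
  simpa [Ne.symm hjk] using congrFun h k

lemma eq_of_apply_ne_toggle {j m : ι} {x : ι → Bool} (h : x m ≠ toggle j x m) : m = j := by
  by_contra hm
  exact h (toggle_apply_of_ne x hm).symm

lemma eq_of_toggle_invariant {α : Type*} [Fintype ι] {f : (ι → Bool) → α}
    (hf : ∀ j x, f (toggle j x) = f x) (x y : ι → Bool) : f x = f y := by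
  suffices h : ∀ s : Finset ι, f (fun j => decide (j ∈ s)) = f fun _ => false by
    have hx : x = fun j => decide (j ∈ ({j | x j = true} : Finset ι)) := by funext; simp
    have hy : y = fun j => decide (j ∈ ({j | y j = true} : Finset ι)) := by funext; simp
    rw [hx, hy, h, h]
  intro s
  induction s using Finset.induction_on with
  | empty => simp
  | insert a s ha ih =>
    rw [← ih, ← hf a]
    congr 1
    funext m
    by_cases hm : m = a
    · subst hm; simp [ha]
    · simp [hm]

variable [Fintype ι]

lemma hammingDist_toggle_self (j : ι) (x : ι → Bool) : hammingDist x (toggle j x) = 1 := by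
  rw [hammingDist, Finset.card_eq_one]
  refine ⟨j, Finset.ext fun m => ?_⟩
  by_cases hm : m = j <;> simp [hm]

lemma exists_toggle_of_hammingDist_eq_one {x y : ι → Bool} (h : hammingDist x y = 1) :
    ∃ j, y = toggle j x := by
  obtain ⟨j, hj⟩ := Finset.card_eq_one.mp h
  refine ⟨j, funext fun m => ?_⟩
  have hm := Finset.ext_iff.mp hj m
  simp only [Finset.mem_filter, Finset.mem_univ, true_and, Finset.mem_singleton] at hm
  revert hm
  rw [toggle_apply]
  split_ifs with h
  · subst h; cases x m <;> cases y m <;> simp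
  · cases x m <;> cases y m <;> simp [h]

lemma natCast_hammingDist_toggle_left (j : ι) (x y : ι → Bool) :
    (hammingDist (toggle j x) y : ℤ) = hammingDist x y + if x j = y j then 1 else -1 := by
  simp only [hammingDist]
  split_ifs with h
  · have : univ.filter (fun m => toggle j x m ≠ y m) =
        insert j (univ.filter fun m => x m ≠ y m) := by
      ext m; by_cases hm : m = j <;> simp_all
    rw [this, Finset.card_insert_of_notMem (by simp [h])]
    push_cast; ring
  · have : univ.filter (fun m => x m ≠ y m) =
        insert j (univ.filter fun m => toggle j x m ≠ y m) := by
      ext m; by_cases hm : m = j <;> simp_all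
    rw [this, Finset.card_insert_of_notMem (by simp_all)]
    push_cast; ring

lemma card_filter_hammingDist_eq_le (t : ι → Bool) (r : ℕ) :
    #{x | hammingDist x t = r} ≤ (Fintype.card ι).choose r := by
  calc #{x | hammingDist x t = r}
      ≤ #(powersetCard r (univ : Finset ι)) := by
        refine card_le_card_of_injOn (fun x => univ.filter fun j => x j ≠ t j) (fun x hx => ?_)
          (fun x _ y _ hxy => funext fun j => ?_)
        · simpa [mem_powersetCard, hammingDist] using hx
        · have := Finset.ext_iff.mp hxy j
          simp only [mem_filter, mem_univ, true_and] at this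
          revert this
          cases x j <;> cases y j <;> cases t j <;> simp
    _ = (Fintype.card ι).choose r := by simp

variable {κ : Type*} [DecidableEq κ] [Fintype κ]

theorem exists_hammingDist_map_add_eq {f : (ι → Bool) → κ → Bool} {δ : ι → κ}
    (hδ : Function.Injective δ) (hf : ∀ x j, f (toggle j x) = toggle (δ j) (f x))
    (z : κ → Bool) :
    ∃ t : ι → Bool, ∀ x y,
      hammingDist (f x) z + hammingDist y t = hammingDist (f y) z + hammingDist x t := by
  set x₀ : ι → Bool := fun _ => false
  have hcoord : ∀ x j, f x (δ j) = xor (f x₀ (δ j)) (x j) := by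
    intro x j
    have := eq_of_toggle_invariant (f := fun x => xor (f x (δ j)) (x j)) (fun k x => ?_) x x₀
    · revert this
      cases f x (δ j) <;> cases f x₀ (δ j) <;> cases x j <;> simp [x₀]
    · by_cases hkj : k = j
      · subst hkj; simp [hf]
      · rw [hf, toggle_apply_of_ne _ (hδ.ne (Ne.symm hkj)), toggle_apply_of_ne _ (Ne.symm hkj)]
  set t : ι → Bool := fun j => xor (f x₀ (δ j)) (z (δ j))
  refine ⟨t, fun x y => ?_⟩
  have key : (hammingDist (f x) z : ℤ) - hammingDist x t =
      hammingDist (f y) z - hammingDist y t :=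
    eq_of_toggle_invariant (f := fun x => (hammingDist (f x) z : ℤ) - hammingDist x t)
      (fun j x => ?_) x y
  · omega
  · simp only [hf, natCast_hammingDist_toggle_left]
    rw [hcoord x j, show t j = xor (f x₀ (δ j)) (z (δ j)) from rfl]
    cases f x₀ (δ j) <;> cases x j <;> cases z (δ j) <;> simp

end Hypercube

open Hypercube

namespace IsCubeEmbedding

variable {d n : ℕ} {i : (Fin d → Bool) → Fin n → Bool}

lemma exists_map_toggle (hi : IsCubeEmbedding i) (x : Fin d → Bool) (j : Fin d) :
    ∃ m, i (toggle j x) = toggle m (i x) :=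
  exists_toggle_of_hammingDist_eq_one (hi.2 _ _ (hammingDist_toggle_self j x))

noncomputable def dir (hi : IsCubeEmbedding i) (x : Fin d → Bool) (j : Fin d) : Fin n :=
  (hi.exists_map_toggle x j).choose

lemma map_toggle (hi : IsCubeEmbedding i) (x : Fin d → Bool) (j : Fin d) :
    i (toggle j x) = toggle (hi.dir x j) (i x) :=
  (hi.exists_map_toggle x j).choose_spec

lemma dir_toggle_self (hi : IsCubeEmbedding i) (x : Fin d → Bool) (j : Fin d) :
    hi.dir (toggle j x) j = hi.dir x j := by
  have h := hi.map_toggle (toggle j x) j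
  rw [toggle_toggle, hi.map_toggle x j] at h
  exact toggle_toggle_eq_self_iff.mp h.symm

lemma dir_injective (hi : IsCubeEmbedding i) (x : Fin d → Bool) :
    Function.Injective (hi.dir x) := by
  intro j k h
  have : toggle j x = toggle k x := hi.1 (by rw [hi.map_toggle, hi.map_toggle, h])
  by_contra hjk
  simpa [Ne.symm hjk] using congrFun this k

lemma dir_toggle_of_ne (hi : IsCubeEmbedding i) (x : Fin d → Bool) {j k : Fin d}
    (hjk : j ≠ k) : hi.dir (toggle k x) j = hi.dir x j := by
  have hba : hi.dir (toggle j x) k ≠ hi.dir x j := by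
    intro h
    have : i (toggle k (toggle j x)) = i x := by
      rw [hi.map_toggle, hi.map_toggle, h, toggle_toggle]
    exact hjk (toggle_toggle_eq_self_iff.mp (hi.1 this)).symm
  have hab : hi.dir x j ≠ hi.dir x k := (hi.dir_injective x).ne hjk
  -- On the image of the square spanned by `j` and `k` at `x`, coordinate `dir x j` is fixed by
  -- the two `k`-edges, so it must also flip along the `j`-edge opposite to the one at `x`.
  symm
  apply eq_of_apply_ne_toggle (x := i (toggle k x))
  rw [← hi.map_toggle, toggle_comm, hi.map_toggle (toggle j x), hi.map_toggle x j,
    hi.map_toggle x k]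
  simp [hab, Ne.symm hba]

lemma dir_eq (hi : IsCubeEmbedding i) (x y : Fin d → Bool) (j : Fin d) :
    hi.dir x j = hi.dir y j := by
  refine eq_of_toggle_invariant (f := fun x => hi.dir x j) (fun k x => ?_) x y
  by_cases hkj : k = j
  · subst hkj; exact hi.dir_toggle_self x k
  · exact hi.dir_toggle_of_ne x (Ne.symm hkj)

theorem exists_injective_map_toggle (hi : IsCubeEmbedding i) :
    ∃ δ : Fin d → Fin n, Function.Injective δ ∧
      ∀ x j, i (toggle j x) = toggle (δ j) (i x) :=
  ⟨hi.dir fun _ => false, hi.dir_injective _, fun x j => by rw [hi.map_toggle, hi.dir_eq x]⟩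

end IsCubeEmbedding

lemma cubeWeight_eq_hammingDist {n : ℕ} (x : Fin n → Bool) :
    cubeWeight x = hammingDist x fun _ => false := by
  simp [cubeWeight, hammingDist]

theorem isFree_cubeWeight_mod {d n : ℕ} (c : ℕ) {F : Set (Fin d → Bool)}
    (hF : d.choose (d / 2) < F.ncard) :
    IsFree F {x : Fin n → Bool | cubeWeight x % (d + 1) = c} := by
  intro i hi hFS
  obtain ⟨δ, hδ, hmap⟩ := hi.exists_injective_map_toggle
  obtain ⟨t, ht⟩ := exists_hammingDist_map_add_eq hδ hmap fun _ => false
  obtain ⟨x₀, hx₀⟩ := Set.nonempty_of_ncard_ne_zero (by omega : F.ncard ≠ 0)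
  have hsphere : F ⊆ {x | hammingDist x t = hammingDist x₀ t} := by
    intro x hx
    have hmod : cubeWeight (i x) ≡ cubeWeight (i x₀) [MOD d + 1] :=
      (hFS ⟨x, hx, rfl⟩).trans (hFS ⟨x₀, hx₀, rfl⟩).symm
    rw [cubeWeight_eq_hammingDist, cubeWeight_eq_hammingDist] at hmod
    have hmod' := hmod.add_right (hammingDist x₀ t)
    rw [ht x x₀] at hmod'
    have hlt (y : Fin d → Bool) : hammingDist y t < d + 1 :=
      hammingDist_le_card_fintype.trans_lt (by simp)
    exact (hmod'.add_left_cancel' _).eq_of_lt_of_lt (hlt x) (hlt x₀)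
  have : F.ncard ≤ d.choose (d / 2) :=
    calc F.ncard ≤ #{x | hammingDist x t = hammingDist x₀ t} := by
          rw [← Set.ncard_coe_finset]
          exact Set.ncard_le_ncard (by simpa using hsphere)
      _ ≤ d.choose (hammingDist x₀ t) := by simpa using card_filter_hammingDist_eq_le t _
      _ ≤ d.choose (d / 2) := Nat.choose_le_middle _ _
  omega


def IsFreeOfCard {n : ℕ} (d t : ℕ) (S : Set (Fin n → Bool)) : Prop :=
  ∀ F : Set (Fin d → Bool), F.ncard = t → IsFree F S

lemma hammingDist_cons {n : ℕ} {β : Type*} [DecidableEq β] (b : β) (u v : Fin n → β) :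
    hammingDist (Fin.cons b u : Fin (n + 1) → β) (Fin.cons b v) = hammingDist u v := by
  simp only [hammingDist, card_filter, Fin.sum_univ_succ, Fin.cons_zero, Fin.cons_succ]
  simp

section Extremal

variable {n d t : ℕ}

lemma IsCubeEmbedding.cons {i : (Fin d → Bool) → Fin n → Bool} (hi : IsCubeEmbedding i)
    (b : Bool) : IsCubeEmbedding fun x => (Fin.cons b (i x) : Fin (n + 1) → Bool) :=
  ⟨fun _ _ h => hi.1 (Fin.cons_right_injective (α := fun _ => Bool) b h),
    fun x y hxy => by rw [hammingDist_cons, hi.2 x y hxy]⟩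

lemma IsFreeOfCard.preimage_cons {S : Set (Fin (n + 1) → Bool)} (hS : IsFreeOfCard d t S)
    (b : Bool) :
    IsFreeOfCard d t ((fun x : Fin n → Bool => (Fin.cons b x : Fin (n + 1) → Bool)) ⁻¹' S) :=
  fun F hF i hi hFS =>
    hS F hF _ (hi.cons b) (by rintro _ ⟨x, hx, rfl⟩; exact hFS ⟨x, hx, rfl⟩)

variable (n d t) in
lemma excT_bddAbove :
    BddAbove {k | ∃ S : Finset (Fin n → Bool), IsFreeOfCard d t (S : Set (Fin n → Bool)) ∧
      #S = k} :=
  ⟨2 ^ n, by rintro _ ⟨S, -, rfl⟩; simpa using S.card_le_univ⟩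

lemma card_le_excT {S : Finset (Fin n → Bool)}
    (hS : IsFreeOfCard d t (S : Set (Fin n → Bool))) :
    #S ≤ excT n d t :=
  le_csSup (excT_bddAbove n d t) ⟨S, hS, rfl⟩

lemma excT_le_of_forall_card_le {k : ℕ}
    (h : ∀ S : Finset (Fin n → Bool), IsFreeOfCard d t (S : Set (Fin n → Bool)) →
      #S ≤ k) :
    excT n d t ≤ k :=
  csSup_le' (by rintro _ ⟨S, hS, rfl⟩; exact h S hS)

variable (n d t) in
lemma excT_succ_le : excT (n + 1) d t ≤ 2 * excT n d t := by
  refine excT_le_of_forall_card_le fun S hS => ?_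
  let half (b : Bool) : Finset (Fin n → Bool) :=
    S.preimage (fun x => Fin.cons b x) (Fin.cons_right_injective (α := fun _ => Bool) b).injOn
  have hcover :
      S ⊆ (half false).image (Fin.cons false) ∪ (half true).image (Fin.cons true) := by
    intro v hv
    obtain ⟨b, u, rfl⟩ : ∃ b u, v = Fin.cons b u :=
      ⟨v 0, Fin.tail v, (Fin.cons_self_tail v).symm⟩
    cases b <;> simp [half, hv]
  have hhalf (b : Bool) : #(half b) ≤ excT n d t :=
    card_le_excT (by simpa [half] using hS.preimage_cons b)
  calc #S ≤ #(half false) + #(half true) :=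
        (card_le_card hcover).trans <|
          (card_union_le _ _).trans (add_le_add card_image_le card_image_le)
    _ ≤ 2 * excT n d t := by linarith [hhalf false, hhalf true]

variable (d t) in
lemma excT_div_antitone : Antitone fun n => (excT n d t : ℝ) / 2 ^ n := by
  refine antitone_nat_of_succ_le fun n => ?_
  have h : (excT (n + 1) d t : ℝ) ≤ 2 * excT n d t := by exact_mod_cast excT_succ_le n d t
  rw [pow_succ, div_le_div_iff₀ (by positivity) (by positivity)]
  nlinarith [pow_pos (two_pos : (0 : ℝ) < 2) n]

variable (n) in
lemma inv_succ_le_excT_div (ht : d.choose (d / 2) < t) :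
    1 / (d + 1 : ℝ) ≤ excT n d t / 2 ^ n := by
  obtain ⟨c, -, hc⟩ := exists_le_card_fiber_of_nsmul_le_card_of_maps_to
    (s := univ) (t := range (d + 1)) (f := fun x : Fin n → Bool => cubeWeight x % (d + 1))
    (b := (2 ^ n : ℝ) / (d + 1)) (fun x _ => mem_range.mpr (Nat.mod_lt _ d.succ_pos))
    ⟨0, by simp⟩ (le_of_eq (by simp; field_simp))
  have hfree : IsFreeOfCard d t
      ((({x | cubeWeight x % (d + 1) = c} : Finset (Fin n → Bool))) : Set (Fin n → Bool)) :=
    fun F hF => by simpa using isFree_cubeWeight_mod c (n := n) (hF ▸ ht)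
  have hexc := hc.trans (Nat.cast_le.mpr (card_le_excT hfree))
  rw [div_le_iff₀ (by positivity)] at hexc
  rw [div_le_div_iff₀ (by positivity) (by positivity)]
  linarith

end Extremal

theorem mu_upper_bound_general (d : ℕ) :
    (∀ n : ℕ, d ≤ n → ∀ F : Set (Fin d → Bool), F.ncard = d.choose (d / 2) + 1 →
      IsFree F {x : Fin n → Bool | cubeWeight x % (d + 1) = 0}) ∧
    (∃ L : ℝ, 1 / (d + 1) ≤ L ∧
      Filter.Tendsto (fun n : ℕ => (excT n d (d.choose (d / 2) + 1) : ℝ) / 2 ^ n)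
        Filter.atTop (𝓝 L)) ∧
    (0 : ℝ) < 1 / (d + 1) ∧
    (∀ t : ℕ,
      Filter.Tendsto (fun n : ℕ => (excT n d t : ℝ) / 2 ^ n) Filter.atTop (𝓝 0) →
      t ≤ d.choose (d / 2)) := by
  have hpos : (0 : ℝ) < 1 / (d + 1) := by positivity
  refine ⟨fun n _ F hF => isFree_cubeWeight_mod 0 (by omega), ?_, hpos, fun t ht => ?_⟩
  · have hbdd : BddBelow (Set.range fun n => (excT n d (d.choose (d / 2) + 1) : ℝ) / 2 ^ n) :=
      ⟨0, by rintro _ ⟨n, rfl⟩; positivity⟩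
    exact ⟨_, le_ciInf fun n => inv_succ_le_excT_div n (Nat.lt_succ_self _),
      tendsto_atTop_ciInf (excT_div_antitone _ _) hbdd⟩
  · by_contra! h
    have := ge_of_tendsto ht (Eventually.of_forall fun n => inv_succ_le_excT_div n h)
    linarith

/-- For every d ≥ 2: for each n ≥ d the set {x : |x| ≡ 0 (mod d+1)} is
𝓕_{d, C(d,⌊d/2⌋)+1}-free; hence λ(𝓕_{d, C(d,⌊d/2⌋)+1}) ≥ 1/(d+1) > 0, and consequently
μ(d) = max{t : λ(𝓕_{d,t}) = 0} satisfies μ(d) ≤ C(d,⌊d/2⌋). -/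
theorem mu_upper_bound (d : ℕ) (hd : 2 ≤ d) :
    (∀ n : ℕ, d ≤ n → ∀ F : Set (Fin d → Bool), F.ncard = d.choose (d / 2) + 1 →
      IsFree F {x : Fin n → Bool | cubeWeight x % (d + 1) = 0}) ∧
    (∃ L : ℝ, 1 / (d + 1) ≤ L ∧
      Filter.Tendsto (fun n : ℕ => (excT n d (d.choose (d / 2) + 1) : ℝ) / 2 ^ n)
        Filter.atTop (𝓝 L)) ∧
    (0 : ℝ) < 1 / (d + 1) ∧
    (∀ t : ℕ,
      Filter.Tendsto (fun n : ℕ => (excT n d t : ℝ) / 2 ^ n) Filter.atTop (𝓝 0) →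
      t ≤ d.choose (d / 2)) :=
  mu_upper_bound_general d
end

section
/- For every integer l ≥ 1 there exists a constant C = C(l) such that for all n ≥ 1 and all S ⊆ V_n: |Σ_{v ∈ V_n} h_l(v)^2 − C(2l,l)·Σ_{x ∈ S} h_{2l}(x)| ≤ C·n^{2l−1}·2^n, where C(2l,l) is the central binomial coefficient. -/
open Finset Filter Topology

/-- h_l(x) = |S ∩ Γ_l(x)|: the number of elements of S at Hamming distance exactly l from x. -/
def hcount {n : ℕ} (S : Finset (Fin n → Bool)) (l : ℕ) (x : Fin n → Bool) : ℕ :=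
  (S.filter fun y => hammingDist x y = l).card

/-- h_l(x,z) = |S ∩ Γ_l(x) ∩ Γ_l(z)|: the number of elements of S at Hamming distance
exactly l from both x and z. -/
def hcount2 {n : ℕ} (S : Finset (Fin n → Bool)) (l : ℕ) (x z : Fin n → Bool) : ℕ :=
  (S.filter fun y => hammingDist x y = l ∧ hammingDist z y = l).card

/-! Expanding the square, `∑_v h_l(v)^2 = ∑_{x,z ∈ S} |Γ_l(x) ∩ Γ_l(z)|`. Translating by `x`
identifies the cube with the power set of the coordinates, with `dist(x, ·)` becoming cardinality;
so a pair at distance `2l` has exactly `C(2l,l)` common neighbours `v` (the `l`-subsets of the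
`2l` coordinates where `x` and `z` differ). Any other pair with a common `v` has
`dist(x,z) < 2l`, so `z` differs from `v` somewhere `x` does; for fixed `x` and `v ∈ Γ_l(x)`
there are at most `l·C(n,l-1)` such `z`, and the total error is at most
`|S|·C(n,l)·l·C(n,l-1) ≤ l·n^(2l-1)·2^n`. -/

open scoped symmDiff

namespace Finset
variable {α : Type*} [DecidableEq α]

theorem card_symmDiff_add_two_mul_card_inter (s t : Finset α) :
    #(s ∆ t) + 2 * #(s ∩ t) = #s + #t := by
  rw [symmDiff_def, sup_eq_union, card_union_of_disjoint disjoint_sdiff_sdiff]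
  have := card_sdiff_add_card_inter s t
  have := card_sdiff_add_card_inter t s
  rw [inter_comm] at this
  omega

variable [Fintype α]

theorem card_filter_card_eq_and_card_symmDiff_eq {s : Finset α} {k : ℕ} (hs : #s = 2 * k) :
    #{t : Finset α | #t = k ∧ #(s ∆ t) = k} = (2 * k).choose k := by
  rw [← hs, ← card_powersetCard k s]
  congr 1
  ext t
  have key := card_symmDiff_add_two_mul_card_inter s t
  simp only [mem_filter, mem_univ, true_and, mem_powersetCard]
  constructor
  · rintro ⟨ht, hst⟩
    refine ⟨?_, ht⟩
    rw [← inter_eq_right]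
    exact eq_of_subset_of_card_le inter_subset_right (by omega)
  · rintro ⟨hts, ht⟩
    rw [inter_eq_right.mpr hts] at key
    omega

theorem card_filter_card_eq_and_not_disjoint_le (s : Finset α) (k : ℕ) :
    #{t : Finset α | #t = k ∧ ¬Disjoint s t} ≤ #s * (Fintype.card α).choose (k - 1) := by
  calc #{t : Finset α | #t = k ∧ ¬Disjoint s t}
      ≤ #(s.biUnion fun i => (powersetCard (k - 1) univ).image (insert i)) := by
        refine card_le_card fun t ht => ?_
        simp only [mem_filter, mem_univ, true_and, not_disjoint_iff] at ht
        obtain ⟨ht, i, his, hit⟩ := ht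
        simp only [mem_biUnion, mem_image, mem_powersetCard_univ]
        exact ⟨i, his, t.erase i, by rw [card_erase_of_mem hit, ht], insert_erase hit⟩
    _ ≤ ∑ i ∈ s, #((powersetCard (k - 1) univ).image (insert i)) := card_biUnion_le
    _ ≤ ∑ i ∈ s, (Fintype.card α).choose (k - 1) :=
        sum_le_sum fun i _ => card_image_le.trans (by rw [card_powersetCard, card_univ])
    _ = #s * (Fintype.card α).choose (k - 1) := by rw [sum_const, smul_eq_mul]

end Finset

section
variable {ι : Type*} [Fintype ι]

def diffSet (x y : ι → Bool) : Finset ι := {i | x i ≠ y i}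

theorem card_diffSet (x y : ι → Bool) : #(diffSet x y) = hammingDist x y := rfl

variable [DecidableEq ι]

theorem diffSet_symmDiff_diffSet (x y z : ι → Bool) :
    diffSet x y ∆ diffSet x z = diffSet y z := by
  ext i
  simp only [diffSet, mem_symmDiff, mem_filter, mem_univ, true_and]
  cases x i <;> cases y i <;> cases z i <;> decide

def diffSetEquiv (x : ι → Bool) : (ι → Bool) ≃ Finset ι where
  toFun := diffSet x
  invFun t i := if i ∈ t then !x i else x i
  left_inv y := by
    funext i
    simp only [diffSet, mem_filter, mem_univ, true_and]
    cases x i <;> cases y i <;> decide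
  right_inv t := by
    ext i
    simp only [diffSet]
    by_cases hi : i ∈ t <;> simp [hi]

theorem card_filter_hammingDist_eq (x : ι → Bool) (l : ℕ) :
    #{v | hammingDist x v = l} = (Fintype.card ι).choose l := by
  rw [← card_univ, ← card_powersetCard]
  exact card_equiv (diffSetEquiv x) fun v => by simp [diffSetEquiv, card_diffSet]

theorem card_filter_hammingDist_eq_and_eq_of_hammingDist_eq_two_mul {x z : ι → Bool} {l : ℕ}
    (h : hammingDist x z = 2 * l) :
    #{v | hammingDist x v = l ∧ hammingDist z v = l} = (2 * l).choose l := by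
  rw [← card_filter_card_eq_and_card_symmDiff_eq (s := diffSet x z) h]
  exact card_equiv (diffSetEquiv x) fun v => by
    simp [diffSetEquiv, diffSet_symmDiff_diffSet, card_diffSet]

theorem card_filter_hammingDist_eq_and_ne_two_mul_le {x v : ι → Bool} {l : ℕ}
    (hxv : hammingDist x v = l) :
    #{z | hammingDist z v = l ∧ hammingDist x z ≠ 2 * l} ≤
      l * (Fintype.card ι).choose (l - 1) := by
  calc #{z | hammingDist z v = l ∧ hammingDist x z ≠ 2 * l}
      ≤ #{t : Finset ι | #t = l ∧ ¬Disjoint (diffSet v x) t} := by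
        refine card_le_card_of_injOn (diffSet v) (fun z hz => ?_)
          (diffSetEquiv v).injective.injOn
        simp only [coe_filter, Set.mem_ofPred_eq, mem_univ, true_and] at hz ⊢
        obtain ⟨hzv, hxz⟩ := hz
        rw [card_diffSet, hammingDist_comm, hzv]
        refine ⟨rfl, fun hdisj => hxz ?_⟩
        rw [← card_diffSet, ← diffSet_symmDiff_diffSet v, symmDiff_eq_union hdisj,
          card_union_of_disjoint hdisj, card_diffSet, card_diffSet, hammingDist_comm v x,
          hammingDist_comm v z, hxv, hzv, two_mul]
    _ ≤ #(diffSet v x) * (Fintype.card ι).choose (l - 1) :=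
        card_filter_card_eq_and_not_disjoint_le _ _
    _ = l * (Fintype.card ι).choose (l - 1) := by rw [card_diffSet, hammingDist_comm, hxv]

end

section
variable {n : ℕ}

theorem sum_hcount_sq (S : Finset (Fin n → Bool)) (l : ℕ) :
    ∑ v, hcount S l v ^ 2 = ∑ x ∈ S, ∑ z ∈ S, hcount2 univ l x z := by
  simp only [hcount, hcount2, sq, card_eq_sum_ones, sum_filter, sum_mul_sum]
  rw [sum_comm]
  refine sum_congr rfl fun x _ => ?_
  rw [sum_comm]
  simp only [ite_zero_mul_ite_zero, mul_one, hammingDist_comm]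

theorem sum_hcount2_univ_filter_ne_two_mul_le (S : Finset (Fin n → Bool)) (l : ℕ)
    (x : Fin n → Bool) :
    ∑ z ∈ S with hammingDist x z ≠ 2 * l, hcount2 univ l x z ≤
      n.choose l * (l * n.choose (l - 1)) := by
  set sphere : Finset (Fin n → Bool) := {v | hammingDist x v = l}
  let r : (Fin n → Bool) → (Fin n → Bool) → Prop := fun z v => hammingDist z v = l
  calc ∑ z ∈ S with hammingDist x z ≠ 2 * l, hcount2 univ l x z
      = ∑ z ∈ S with hammingDist x z ≠ 2 * l, #(sphere.bipartiteAbove r z) := by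
        simp only [hcount2, bipartiteAbove, sphere, r, filter_filter]
    _ = ∑ v ∈ sphere, #({z ∈ S | hammingDist x z ≠ 2 * l}.bipartiteBelow r v) :=
        sum_card_bipartiteAbove_eq_sum_card_bipartiteBelow r
    _ ≤ ∑ v ∈ sphere, l * n.choose (l - 1) := by
        refine sum_le_sum fun v hv => le_trans (card_le_card fun z hz => ?_)
          ((card_filter_hammingDist_eq_and_ne_two_mul_le (mem_filter.1 hv).2).trans_eq
            (by rw [Fintype.card_fin]))
        simp only [bipartiteBelow, r, mem_filter] at hz ⊢
        exact ⟨mem_univ z, hz.2, hz.1.2⟩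
    _ = n.choose l * (l * n.choose (l - 1)) := by
        rw [sum_const, smul_eq_mul, card_filter_hammingDist_eq, Fintype.card_fin]

theorem sum_hcount_sq_eq (S : Finset (Fin n → Bool)) (l : ℕ) :
    ∑ v, hcount S l v ^ 2 = (2 * l).choose l * ∑ x ∈ S, hcount S (2 * l) x +
      ∑ x ∈ S, ∑ z ∈ S with hammingDist x z ≠ 2 * l, hcount2 univ l x z := by
  rw [sum_hcount_sq, mul_sum, ← sum_add_distrib]
  refine sum_congr rfl fun x _ => ?_
  rw [← sum_filter_add_sum_filter_not S (fun z => hammingDist x z = 2 * l)]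
  congr 1
  rw [sum_congr rfl fun z hz => show hcount2 univ l x z = (2 * l).choose l from
    card_filter_hammingDist_eq_and_eq_of_hammingDist_eq_two_mul (mem_filter.1 hz).2,
    sum_const, smul_eq_mul, mul_comm, hcount]

theorem sum_sum_hcount2_univ_filter_ne_two_mul_le (S : Finset (Fin n → Bool)) (l : ℕ) :
    ∑ x ∈ S, ∑ z ∈ S with hammingDist x z ≠ 2 * l, hcount2 univ l x z ≤
      l * n ^ (2 * l - 1) * 2 ^ n := by
  calc ∑ x ∈ S, ∑ z ∈ S with hammingDist x z ≠ 2 * l, hcount2 univ l x z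
      ≤ #S * (n.choose l * (l * n.choose (l - 1))) := by
        simpa using sum_le_sum fun x _ => sum_hcount2_univ_filter_ne_two_mul_le S l x
    _ ≤ 2 ^ n * (n ^ l * (l * n ^ (l - 1))) := by
        gcongr
        · simpa using card_le_univ S
        · exact Nat.choose_le_pow n l
        · exact Nat.choose_le_pow n (l - 1)
    _ = l * n ^ (2 * l - 1) * 2 ^ n := by
        rw [show 2 * l - 1 = l + (l - 1) by omega, pow_add]
        ring

end

theorem key_lemma_i_general (l : ℕ) :
    ∃ C : ℝ, ∀ n : ℕ, 1 ≤ n → ∀ S : Finset (Fin n → Bool),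
      |(∑ v : Fin n → Bool, (hcount S l v : ℝ) ^ 2) -
          ((2 * l).choose l : ℝ) * ∑ x ∈ S, (hcount S (2 * l) x : ℝ)| ≤
        C * (n : ℝ) ^ (2 * l - 1) * 2 ^ n := by
  refine ⟨l, fun n _ S => ?_⟩
  have hsplit := congrArg (Nat.cast : ℕ → ℝ) (sum_hcount_sq_eq S l)
  have hbound := sum_sum_hcount2_univ_filter_ne_two_mul_le S l
  push_cast at hsplit
  rw [hsplit, add_sub_cancel_left, abs_of_nonneg (by positivity)]
  exact_mod_cast hbound

/-- Key lemma (i): Σ_{v ∈ V_n} h_l(v)² = C(2l,l)·Σ_{x ∈ S} h_{2l}(x) + O(n^{2l−1} 2^n). -/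
theorem key_lemma_i (l : ℕ) (hl : 1 ≤ l) :
    ∃ C : ℝ, ∀ n : ℕ, 1 ≤ n → ∀ S : Finset (Fin n → Bool),
      |(∑ v : Fin n → Bool, (hcount S l v : ℝ) ^ 2) -
          ((2 * l).choose l : ℝ) * ∑ x ∈ S, (hcount S (2 * l) x : ℝ)| ≤
        C * (n : ℝ) ^ (2 * l - 1) * 2 ^ n :=
  key_lemma_i_general l
end
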